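/- arXiv:2402.13390 — 4 statements merged into one kernel-verified Lean document; each statement's English description precedes it below -/
import Mathlib

section
/- Let g be the 6-dimensional real Lie algebra with basis e_1,…,e_6 and structure equations (in terms of the Chevalley–Eilenberg differential on the dual basis) de^1 = −e^{12}, de^2 = 0, de^3 = 2e^{36}, de^4 = −e^{46}, de^5 = e^{56} − e^{34}, de^6 = 0. Then the almost complex structure J with J(e_1) = e_2, J(e_3) = (1/2)e_6, J(e_4) = e_5 (and J² = −Id) is integrable, and for any a > 0, b > 0 the 2-form ω = e^{12} + 2a·e^{36} + b·e^{45} is positive with respect to J (i.e., k(u,v) = −ω(Ju,v) is a J-compatible inner product), and the resulting Hermitian structure (g, J, k) is balanced. -/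
open scoped BigOperators

section TCPDefs

variable {V V₁ V₂ W : Type*} [AddCommGroup V] [Module ℝ V]
  [AddCommGroup V₁] [Module ℝ V₁] [AddCommGroup V₂] [Module ℝ V₂]
  [AddCommGroup W] [Module ℝ W]

/-- Real-bilinearity of a two-argument map. -/
def IsBilinMap (f : V₁ → V₂ → W) : Prop :=
  (∀ x y z, f (x + y) z = f x z + f y z) ∧ (∀ (c : ℝ) x z, f (c • x) z = c • f x z) ∧
  (∀ x y z, f x (y + z) = f x y + f x z) ∧ (∀ (c : ℝ) x z, f x (c • z) = c • f x z)

/-- The Jacobi identity for a bracket. -/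
def Jacobi (l : V → V → V) : Prop :=
  ∀ u v w, l (l u v) w + l (l v w) u + l (l w u) v = 0

/-- A (real) Lie bracket: bilinear, antisymmetric, Jacobi. -/
def IsLieBracket (l : V → V → V) : Prop :=
  IsBilinMap l ∧ (∀ u v, l u v = -l v u) ∧ Jacobi l

/-- D is a derivation of the bracket l. -/
def IsDeriv (l : V → V → V) (D : V → V) : Prop :=
  ∀ u v, D (l u v) = l (D u) v + l u (D v)

/-- Compatibility of the couple (ρ1, ρ2). -/
def Compat (ρ1 : V₁ → V₂ → V₂) (ρ2 : V₂ → V₁ → V₁) : Prop :=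
  (∀ (x : V₁) (a b : V₂), ρ1 (ρ2 a x) b = ρ1 (ρ2 b x) a) ∧
  (∀ (x y : V₁) (a : V₂), ρ2 (ρ1 x a) y = ρ2 (ρ1 y a) x)

/-- The twisted cartesian product bracket on V₁ × V₂. -/
def twBr (l1 : V₁ → V₁ → V₁) (l2 : V₂ → V₂ → V₂)
    (ρ1 : V₁ → V₂ → V₂) (ρ2 : V₂ → V₁ → V₁) (u v : V₁ × V₂) : V₁ × V₂ :=
  (l1 u.1 v.1 + ρ2 u.2 v.1 - ρ2 v.2 u.1, l2 u.2 v.2 + ρ1 u.1 v.2 - ρ1 v.1 u.2)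

/-- The product almost complex structure. -/
def prodJ (J1 : V₁ → V₁) (J2 : V₂ → V₂) (u : V₁ × V₂) : V₁ × V₂ := (J1 u.1, J2 u.2)

/-- The product metric. -/
def prodK (k1 : V₁ → V₁ → ℝ) (k2 : V₂ → V₂ → ℝ) (u v : V₁ × V₂) : ℝ :=
  k1 u.1 v.1 + k2 u.2 v.2

/-- Nijenhuis tensor of J with respect to the bracket l. -/
def nijenhuis (l : V → V → V) (J : V → V) (u v : V) : V :=
  l (J u) (J v) - l u v - J (l (J u) v + l u (J v))

/-- Fundamental 2-form ω(u,v) = k(Ju, v). -/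
def fund (k : V → V → ℝ) (J : V → V) (u v : V) : ℝ := k (J u) v

/-- Chevalley–Eilenberg differential of a 2-form. -/
def d2 (l : V → V → V) (ω : V → V → ℝ) (u v w : V) : ℝ :=
  -ω (l u v) w + ω (l u w) v - ω (l v w) u

/-- Chevalley–Eilenberg differential of a 1-form. -/
def d1 (l : V → V → V) (θ : V → ℝ) (u v : V) : ℝ := -θ (l u v)

/-- Wedge product of a 1-form with a 2-form, evaluated on three vectors. -/
def wedge12 (θ : V → ℝ) (ω : V → V → ℝ) (u v w : V) : ℝ :=
  θ u * ω v w - θ v * ω u w + θ w * ω u v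

/-- The Koszul formula characterizing the Levi-Civita product of (g, k). -/
def IsLeviCivita (k : V → V → ℝ) (l : V → V → V) (nab : V → V → V) : Prop :=
  ∀ u v w, 2 * k (nab u v) w = k (l u v) w - k (l v w) u - k (l u w) v

/-- Codifferential of a 2-form ω relative to a family E (an orthonormal basis)
    and a Levi-Civita product nab:  d*ω(X) = −Σ_i (∇_{E_i}ω)(E_i, X). -/
def codiff {ι : Type*} [Fintype ι] (E : ι → V) (nab : V → V → V)
    (ω : V → V → ℝ) (X : V) : ℝ :=
  -∑ i, (-(ω (nab (E i) (E i)) X) - ω (E i) (nab (E i) X))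

/-- Lee form θ = −d*ω ∘ J. -/
def leeForm {ι : Type*} [Fintype ι] (E : ι → V) (nab : V → V → V)
    (k : V → V → ℝ) (J : V → V) (X : V) : ℝ :=
  -codiff E nab (fund k J) (J X)

/-- A family is orthonormal with respect to k. -/
def Orthonormal' {ι : Type*} [DecidableEq ι] (k : V → V → ℝ) (E : ι → V) : Prop :=
  ∀ i j, k (E i) (E j) = if i = j then 1 else 0

/-- k is an inner product: symmetric, bilinear, positive definite. -/
def IsInner (k : V → V → ℝ) : Prop :=
  IsBilinMap k ∧ (∀ u v, k u v = k v u) ∧ (∀ u, u ≠ 0 → 0 < k u u)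

/-- A Hermitian structure on the Lie algebra (V, l). -/
def IsHermitian (l : V → V → V) (J : V → V) (k : V → V → ℝ) : Prop :=
  IsInner k ∧ (∀ u, J (J u) = -u) ∧ (∀ u v, nijenhuis l J u v = 0) ∧
  (∀ u v, k (J u) (J v) = k u v)

end TCPDefs

/-- The bracket of aff(ℝ) ⋈ d_{4,2} (indices 0,…,5 stand for e₁,…,e₆):
[e₁,e₂]=e₁, [e₃,e₆]=−2e₃, [e₄,e₆]=e₄, [e₃,e₄]=e₅, [e₅,e₆]=−e₅, matching the
structure equations de¹=−e¹², de³=2e³⁶, de⁴=−e⁴⁶, de⁵=e⁵⁶−e³⁴. -/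
def br12 (u v : Fin 6 → ℝ) : Fin 6 → ℝ :=
  ![u 0 * v 1 - u 1 * v 0,
    0,
    -2 * (u 2 * v 5 - u 5 * v 2),
    u 3 * v 5 - u 5 * v 3,
    (u 2 * v 3 - u 3 * v 2) - (u 4 * v 5 - u 5 * v 4),
    0]

/-- J(e₁)=e₂, J(e₃)=(1/2)e₆, J(e₄)=e₅ with J² = −Id. -/
noncomputable def J12 (u : Fin 6 → ℝ) : Fin 6 → ℝ :=
  ![-u 1, u 0, -2 * u 5, -u 4, u 3, (1 / 2) * u 2]

/-- The 2-form ω = e¹² + 2a·e³⁶ + b·e⁴⁵. -/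
def om12 (a b : ℝ) (u v : Fin 6 → ℝ) : ℝ :=
  (u 0 * v 1 - u 1 * v 0) + 2 * a * (u 2 * v 5 - u 5 * v 2) + b * (u 3 * v 4 - u 4 * v 3)

private lemma cons_val_five {α : Type*} (x : α) (u : Fin 5 → α) :
    Matrix.vecCons x u (5 : Fin 6) = u 4 := rfl

/-- The matrix of the operator `A_Y` with `B_Y(u,v) = k(A_Y u, v)` used in the
trace computation of the Lee form. -/
noncomputable def M12 (a b : ℝ) (Y : Fin 6 → ℝ) : Matrix (Fin 6) (Fin 6) ℝ :=
  !![0, 2*Y 1, 0, 0, 0, 0;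
     -2*Y 1, 0, 0, 0, 0, 0;
     0, 0, 0, -(b/a)*Y 3, (b/a)*Y 4, -8*Y 5;
     0, 0, Y 3, 0, -2*Y 5, 2*Y 4;
     0, 0, -Y 4, 2*Y 5, 0, 2*Y 3;
     0, 0, 2*Y 5, -(b/(2*a))*Y 4, -(b/(2*a))*Y 3, 0]

private lemma M12_trace (a b : ℝ) (Y : Fin 6 → ℝ) : (M12 a b Y).trace = 0 := by
  simp [M12, cons_val_five, Matrix.trace, Matrix.diag, Fin.sum_univ_six]

set_option maxHeartbeats 2000000 in
private lemma key_identity (a b : ℝ) (ha : a ≠ 0) (Y u v : Fin 6 → ℝ) :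
    2 * om12 a b (br12 u (J12 Y)) (J12 v) + om12 a b (br12 u Y) (J12 (J12 v))
      - om12 a b (br12 Y (J12 v)) (J12 u) - om12 a b (br12 u (J12 v)) (J12 Y)
    = om12 a b ((Matrix.toLin' (M12 a b Y)) u) (J12 v) := by
  simp only [Matrix.toLin'_apply, M12, om12, J12, br12, Matrix.mulVec, dotProduct,
    Fin.sum_univ_six, Matrix.cons_val', Matrix.cons_val_zero, Matrix.cons_val_one,
    Matrix.head_cons, Matrix.empty_val', Matrix.cons_val_fin_one, Matrix.head_fin_const,
    Matrix.cons_val_two, Matrix.cons_val_three, Matrix.cons_val_four, Matrix.tail_cons,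
    Matrix.of_apply, cons_val_five]
  field_simp
  ring

private lemma sum_diag_eq_trace {ι : Type} [Fintype ι] [DecidableEq ι] (a b : ℝ)
    (b' : Module.Basis ι ℝ (Fin 6 → ℝ))
    (hON : Orthonormal' (fun u v => om12 a b u (J12 v)) ⇑b')
    (f : (Fin 6 → ℝ) →ₗ[ℝ] (Fin 6 → ℝ)) :
    ∑ i, om12 a b (f (b' i)) (J12 (b' i)) = LinearMap.trace ℝ (Fin 6 → ℝ) f := by
  have hrep : ∀ (w : Fin 6 → ℝ) (i : ι), om12 a b w (J12 (b' i)) = b'.repr w i := by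
    intro w i
    let L : (Fin 6 → ℝ) →ₗ[ℝ] ℝ :=
      { toFun := fun w => om12 a b w (J12 (b' i)),
        map_add' := by intro w1 w2; simp [om12, cons_val_five]; ring,
        map_smul' := by intro c w1; simp [om12, cons_val_five]; ring }
    have hL : om12 a b w (J12 (b' i)) = L w := rfl
    rw [hL]
    conv_lhs => rw [← b'.sum_repr w]
    rw [map_sum]
    simp only [map_smul, smul_eq_mul]
    have hLb : ∀ j : ι, L (b' j) = if j = i then 1 else 0 := fun j => hON j i
    simp [hLb]
  rw [LinearMap.trace_eq_matrix_trace ℝ b' f]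
  simp [Matrix.trace, Matrix.diag, LinearMap.toMatrix_apply, hrep]

set_option maxHeartbeats 2000000 in
/-- on aff(ℝ) ⋈ d_{4,2}, J is integrable and, for any a,b > 0,
ω = e¹² + 2a·e³⁶ + b·e⁴⁵ is positive with respect to J, i.e. k(u,v) = ω(u,Jv)
is a J-compatible inner product, and the resulting Hermitian structure is
balanced. -/
theorem aff_join_d42_balanced (a b : ℝ) (ha : 0 < a) (hb : 0 < b) :
    IsLieBracket br12 ∧
    (∀ u, J12 (J12 u) = -u) ∧
    (∀ u v, nijenhuis br12 J12 u v = 0) ∧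
    IsInner (fun u v => om12 a b u (J12 v)) ∧
    (∀ u v, om12 a b (J12 u) (J12 v) = om12 a b u v) ∧
    (∀ u v, (fun u v => om12 a b u (J12 v)) (J12 u) (J12 v) =
      (fun u v => om12 a b u (J12 v)) u v) ∧
    (∀ (ι : Type) [Fintype ι] [DecidableEq ι] (b' : Module.Basis ι ℝ (Fin 6 → ℝ)),
      Orthonormal' (fun u v => om12 a b u (J12 v)) ⇑b' →
      ∀ nab, IsLeviCivita (fun u v => om12 a b u (J12 v)) br12 nab →
        ∀ X, leeForm (⇑b') nab (fun u v => om12 a b u (J12 v)) J12 X = 0) := by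
  have homJJ : ∀ w z : Fin 6 → ℝ, om12 a b w (J12 (J12 z)) = -om12 a b w z := by
    intro w z; simp [om12, J12, cons_val_five]; ring
  have hanti : ∀ w z : Fin 6 → ℝ, om12 a b w z = -om12 a b z w := by
    intro w z; simp [om12, cons_val_five]; ring
  have hJinv : ∀ u v : Fin 6 → ℝ, om12 a b (J12 u) (J12 v) = om12 a b u v := by
    intro u v; simp [om12, J12, cons_val_five]; ring
  have hbr0 : ∀ u : Fin 6 → ℝ, br12 u u = 0 := by
    intro u; funext s; fin_cases s <;> simp [br12, cons_val_five] <;> ring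
  refine ⟨⟨⟨?_, ?_, ?_, ?_⟩, ?_, ?_⟩, ?_, ?_, ⟨⟨?_, ?_, ?_, ?_⟩, ?_, ?_⟩, ?_, ?_, ?_⟩
  · intro x y z; funext s; fin_cases s <;> simp [br12, cons_val_five] <;> ring
  · intro c x z; funext s; fin_cases s <;> simp [br12, cons_val_five] <;> ring
  · intro x y z; funext s; fin_cases s <;> simp [br12, cons_val_five] <;> ring
  · intro c x z; funext s; fin_cases s <;> simp [br12, cons_val_five] <;> ring
  · intro u v; funext s; fin_cases s <;> simp [br12, cons_val_five] <;> ring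
  · intro u v w; funext s; fin_cases s <;> simp [br12, cons_val_five] <;> ring
  · intro u; funext s; fin_cases s <;> simp [J12, cons_val_five] <;> ring
  · intro u v; funext s; fin_cases s <;> simp [nijenhuis, br12, J12, cons_val_five] <;> ring
  · intro x y z; simp [om12, J12, cons_val_five]; ring
  · intro c x z; simp [om12, J12, cons_val_five]; ring
  · intro x y z; simp [om12, J12, cons_val_five]; ring
  · intro c x z; simp [om12, J12, cons_val_five]; ring
  · intro u v; simp [om12, J12, cons_val_five]; ring
  · intro u hu
    have hkey : (fun u v => om12 a b u (J12 v)) u u =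
        u 0 * u 0 + u 1 * u 1 + a * (u 2 * u 2) + b * (u 3 * u 3) + b * (u 4 * u 4)
          + 4 * a * (u 5 * u 5) := by
      simp [om12, J12, cons_val_five]; ring
    rw [hkey]
    by_contra hle
    push_neg at hle
    have hn0 := mul_self_nonneg (u 0)
    have hn1 := mul_self_nonneg (u 1)
    have hn2 := mul_nonneg ha.le (mul_self_nonneg (u 2))
    have hn3 := mul_nonneg hb.le (mul_self_nonneg (u 3))
    have hn4 := mul_nonneg hb.le (mul_self_nonneg (u 4))
    have hn5 := mul_nonneg ha.le (mul_self_nonneg (u 5))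
    have e0 : u 0 = 0 := mul_self_eq_zero.mp
      (le_antisymm (by nlinarith) (mul_self_nonneg _))
    have e1 : u 1 = 0 := mul_self_eq_zero.mp
      (le_antisymm (by nlinarith) (mul_self_nonneg _))
    have e2 : u 2 = 0 := mul_self_eq_zero.mp
      (le_antisymm (by nlinarith [mul_self_nonneg (u 2)]) (mul_self_nonneg _))
    have e3 : u 3 = 0 := mul_self_eq_zero.mp
      (le_antisymm (by nlinarith [mul_self_nonneg (u 3)]) (mul_self_nonneg _))
    have e4 : u 4 = 0 := mul_self_eq_zero.mp
      (le_antisymm (by nlinarith [mul_self_nonneg (u 4)]) (mul_self_nonneg _))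
    have e5 : u 5 = 0 := mul_self_eq_zero.mp
      (le_antisymm (by nlinarith [mul_self_nonneg (u 5)]) (mul_self_nonneg _))
    exact hu (funext fun s => by
      fin_cases s <;> first | exact e0 | exact e1 | exact e2 | exact e3 | exact e4 | exact e5)
  · exact hJinv
  · intro u v
    show om12 a b (J12 u) (J12 (J12 v)) = om12 a b u (J12 v)
    simp [om12, J12, cons_val_five]; ring
  · intro ι _ _ b' hON nab hLC X
    have hterm : ∀ i, 2 * (-(om12 a b (nab (b' i) (b' i)) (J12 X))
          - om12 a b (b' i) (nab (b' i) (J12 X)))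
        = -(om12 a b ((Matrix.toLin' (M12 a b (J12 X))) (b' i)) (J12 (b' i))) := by
      intro i
      have h1 : 2 * om12 a b (nab (b' i) (b' i)) (J12 (J12 (J12 X)))
          = om12 a b (br12 (b' i) (b' i)) (J12 (J12 (J12 X)))
            - om12 a b (br12 (b' i) (J12 (J12 X))) (J12 (b' i))
            - om12 a b (br12 (b' i) (J12 (J12 X))) (J12 (b' i)) :=
        hLC (b' i) (b' i) (J12 (J12 X))
      have h2 : 2 * om12 a b (nab (b' i) (J12 X)) (J12 (J12 (b' i)))
          = om12 a b (br12 (b' i) (J12 X)) (J12 (J12 (b' i)))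
            - om12 a b (br12 (J12 X) (J12 (b' i))) (J12 (b' i))
            - om12 a b (br12 (b' i) (J12 (b' i))) (J12 (J12 X)) :=
        hLC (b' i) (J12 X) (J12 (b' i))
      rw [hbr0] at h1
      have h0 : om12 a b (0 : Fin 6 → ℝ) (J12 (J12 (J12 X))) = 0 := by
        simp [om12]
      have hk := key_identity a b (ne_of_gt ha) (J12 X) (b' i) (b' i)
      have r1 : om12 a b (nab (b' i) (b' i)) (J12 (J12 (J12 X)))
          = -om12 a b (nab (b' i) (b' i)) (J12 X) := homJJ _ _
      have r2 : om12 a b (nab (b' i) (J12 X)) (J12 (J12 (b' i)))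
          = -om12 a b (nab (b' i) (J12 X)) (b' i) := homJJ _ _
      have r3 : om12 a b (b' i) (nab (b' i) (J12 X))
          = -om12 a b (nab (b' i) (J12 X)) (b' i) := hanti _ _
      rw [h0, r1] at h1
      rw [r2] at h2
      rw [r3]
      linarith [h1, h2, hk]
    have htr : ∑ i, om12 a b ((Matrix.toLin' (M12 a b (J12 X))) (b' i)) (J12 (b' i)) = 0 := by
      rw [sum_diag_eq_trace a b b' hON (Matrix.toLin' (M12 a b (J12 X)))]
      rw [LinearMap.trace_eq_matrix_trace ℝ (Pi.basisFun ℝ (Fin 6)),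
        LinearMap.toMatrix_eq_toMatrix', LinearMap.toMatrix'_toLin']
      exact M12_trace a b (J12 X)
    have hsum : ∑ i, (-(om12 a b (nab (b' i) (b' i)) (J12 X))
        - om12 a b (b' i) (nab (b' i) (J12 X))) = 0 := by
      have h2s : (2:ℝ) * ∑ i, (-(om12 a b (nab (b' i) (b' i)) (J12 X))
          - om12 a b (b' i) (nab (b' i) (J12 X))) = 0 := by
        rw [Finset.mul_sum, Finset.sum_congr rfl (fun i _ => hterm i),
          Finset.sum_neg_distrib, htr, neg_zero]
      linarith
    simp only [leeForm, codiff, fund, neg_neg, hJinv]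
    exact hsum
end

section
/- For a Hermitian twisted cartesian product (g1 ⋈ g2, J, k), the codifferential of the fundamental form ω at an element x ∈ g1 satisfies d*ω(J1 x) = −θ1(x) + tr(ρ1(x)), where θ1 is the Lee form of (g1, J1, k1) and tr(ρ1(x)) is the trace of ρ1(x) ∈ End(g2). -/
open scoped BigOperators

/-!
Expand the codifferential through the Koszul formula: each basis vector `e` contributes
`k([e, JX], e) + (k([e, X], Je) - k([X, Je], e) - k([e, Je], X)) / 2`.
In the twisted product, at `X = (x, 0)` the vectors `(e, 0)` contribute exactly the terms of the
codifferential of `g₁`, while a vector `(0, b)` contributes `-k₂(ρ₁(J₁x) b, b)`, because the two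
remaining terms cancel as `ρ₁(x)` commutes with `J₂`. Summing over an orthonormal basis of `g₂`
gives `-tr ρ₁(J₁x)`; evaluating at `J₁x` turns this into `tr ρ₁(x)`.
-/

section Bilinear

variable {V₁ V₂ W : Type*} [AddCommGroup V₁] [Module ℝ V₁] [AddCommGroup V₂] [Module ℝ V₂]
  [AddCommGroup W] [Module ℝ W] {f : V₁ → V₂ → W}

namespace IsBilinMap

def toLinearMap₂ (hf : IsBilinMap f) : V₁ →ₗ[ℝ] V₂ →ₗ[ℝ] W :=
  LinearMap.mk₂ ℝ f hf.1 hf.2.1 hf.2.2.1 hf.2.2.2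

@[simp]
lemma toLinearMap₂_apply (hf : IsBilinMap f) (x : V₁) (z : V₂) : hf.toLinearMap₂ x z = f x z :=
  rfl

lemma zero_left (hf : IsBilinMap f) (z : V₂) : f 0 z = 0 :=
  hf.toLinearMap₂.map_zero₂ z

lemma zero_right (hf : IsBilinMap f) (x : V₁) : f x 0 = 0 :=
  (hf.toLinearMap₂ x).map_zero

lemma neg_left (hf : IsBilinMap f) (x : V₁) (z : V₂) : f (-x) z = -f x z :=
  hf.toLinearMap₂.map_neg₂ x z

lemma neg_right (hf : IsBilinMap f) (x : V₁) (z : V₂) : f x (-z) = -f x z :=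
  (hf.toLinearMap₂ x).map_neg z

end IsBilinMap

lemma isBilinMap_prodK {k1 : V₁ → V₁ → ℝ} {k2 : V₂ → V₂ → ℝ}
    (hk1 : IsBilinMap k1) (hk2 : IsBilinMap k2) : IsBilinMap (prodK k1 k2) := by
  refine ⟨fun u v w => ?_, fun c u w => ?_, fun u v w => ?_, fun c u w => ?_⟩
  · simp only [prodK, Prod.fst_add, Prod.snd_add, hk1.1, hk2.1]; ring
  · simp only [prodK, Prod.smul_fst, Prod.smul_snd, hk1.2.1, hk2.2.1, smul_eq_mul]; ring
  · simp only [prodK, Prod.fst_add, Prod.snd_add, hk1.2.2.1, hk2.2.2.1]; ring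
  · simp only [prodK, Prod.smul_fst, Prod.smul_snd, hk1.2.2.2, hk2.2.2.2, smul_eq_mul]; ring

end Bilinear

section CompatibleComplexStructure

variable {V V₁ V₂ : Type*} [AddCommGroup V] [Module ℝ V]
  [AddCommGroup V₁] [Module ℝ V₁] [AddCommGroup V₂] [Module ℝ V₂]

structure IsCompatibleComplexStructure (k : V → V → ℝ) (J : V → V) : Prop where
  bilin : IsBilinMap k
  symm : ∀ u v, k u v = k v u
  J_J : ∀ u, J (J u) = -u
  form_J_J : ∀ u v, k (J u) (J v) = k u v

lemma IsHermitian.isCompatibleComplexStructure {l : V → V → V} {J : V → V} {k : V → V → ℝ}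
    (h : IsHermitian l J k) : IsCompatibleComplexStructure k J :=
  ⟨h.1.1, h.1.2.1, h.2.1, h.2.2.2⟩

namespace IsCompatibleComplexStructure

lemma form_J_left {k : V → V → ℝ} {J : V → V} (h : IsCompatibleComplexStructure k J) (u v : V) :
    k (J u) v = -k u (J v) := by
  rw [← h.form_J_J u (J v), h.J_J, h.bilin.neg_right, neg_neg]

lemma prod {k1 : V₁ → V₁ → ℝ} {k2 : V₂ → V₂ → ℝ} {J1 : V₁ → V₁} {J2 : V₂ → V₂}
    (h1 : IsCompatibleComplexStructure k1 J1) (h2 : IsCompatibleComplexStructure k2 J2) :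
    IsCompatibleComplexStructure (prodK k1 k2) (prodJ J1 J2) where
  bilin := isBilinMap_prodK h1.bilin h2.bilin
  symm u v := by simp only [prodK, h1.symm u.1, h2.symm u.2]
  J_J u := by simp only [prodJ, h1.J_J, h2.J_J]; rfl
  form_J_J u v := by simp only [prodK, prodJ, h1.form_J_J, h2.form_J_J]

end IsCompatibleComplexStructure

end CompatibleComplexStructure

section Codifferential

variable {V : Type*} [AddCommGroup V] [Module ℝ V]

/-- The Koszul expression of `-(∇_e ω)(e, X)` for the fundamental form `ω = fund k J`. -/
noncomputable def koszulCodiffTerm (k : V → V → ℝ) (l : V → V → V) (J : V → V) (e X : V) : ℝ :=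
  k (l e (J X)) e + (k (l e X) (J e) - k (l X (J e)) e - k (l e (J e)) X) / 2

lemma codiff_fund_eq_sum_koszulCodiffTerm {ι : Type*} [Fintype ι] {k : V → V → ℝ}
    {l : V → V → V} {J : V → V} {nab : V → V → V} (hkJ : IsCompatibleComplexStructure k J)
    (hl : ∀ u v, l u v = -l v u) (hnab : IsLeviCivita k l nab) (E : ι → V) (X : V) :
    codiff E nab (fund k J) X = ∑ i, koszulCodiffTerm k l J (E i) X := by
  simp only [codiff, fund, ← Finset.sum_neg_distrib]
  refine Finset.sum_congr rfl fun i _ => ?_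
  set e := E i
  have hee : k (l e e) (J X) = -k (l e e) (J X) := by
    rw [← hkJ.bilin.neg_left, ← hl]
  have hnab_ee := hnab e e (J X)
  have hnab_eX := hnab e X (J e)
  rw [koszulCodiffTerm, hkJ.form_J_left, hkJ.symm (J e)]
  linarith

lemma trace_eq_sum_of_orthonormal {ι : Type*} [Fintype ι] [DecidableEq ι] {k : V → V → ℝ}
    (hk : IsBilinMap k) (b : Module.Basis ι ℝ V) (hb : Orthonormal' k ⇑b) (T : Module.End ℝ V) :
    LinearMap.trace ℝ V T = ∑ j, k (T (b j)) (b j) := by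
  have hcoord : ∀ j, hk.toLinearMap₂.flip (b j) = b.coord j := fun j =>
    b.ext fun i => by simp [hb i j, Finsupp.single_apply]
  rw [LinearMap.trace_eq_matrix_trace ℝ b, Matrix.trace]
  refine Finset.sum_congr rfl fun j _ => ?_
  simpa [LinearMap.toMatrix_apply] using (LinearMap.congr_fun (hcoord j) (T (b j))).symm

end Codifferential

section TwistedProduct

variable {V₁ V₂ : Type*} [AddCommGroup V₁] [Module ℝ V₁] [AddCommGroup V₂] [Module ℝ V₂]
  {l1 : V₁ → V₁ → V₁} {l2 : V₂ → V₂ → V₂} (ρ1 : V₁ →ₗ[ℝ] Module.End ℝ V₂)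
  (ρ2 : V₂ →ₗ[ℝ] Module.End ℝ V₁)

lemma twBr_antisymm (hl1 : ∀ x y, l1 x y = -l1 y x) (hl2 : ∀ a b, l2 a b = -l2 b a)
    (u v : V₁ × V₂) :
    twBr l1 l2 (fun x a => ρ1 x a) (fun a x => ρ2 a x) u v =
      -twBr l1 l2 (fun x a => ρ1 x a) (fun a x => ρ2 a x) v u := by
  simp only [twBr, Prod.neg_mk, hl1 u.1, hl2 u.2]
  congr 1 <;> abel

lemma twBr_inl_inl (hl2 : IsBilinMap l2) (x y : V₁) :
    twBr l1 l2 (fun x a => ρ1 x a) (fun a x => ρ2 a x) (x, 0) (y, 0) = (l1 x y, 0) := by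
  simp [twBr, hl2.zero_left]

lemma twBr_inr_inl (hl1 : IsBilinMap l1) (hl2 : IsBilinMap l2) (a : V₂) (y : V₁) :
    twBr l1 l2 (fun x a => ρ1 x a) (fun a x => ρ2 a x) (0, a) (y, 0) = (ρ2 a y, -ρ1 y a) := by
  simp [twBr, hl1.zero_left, hl2.zero_right]

lemma twBr_inl_inr (hl1 : IsBilinMap l1) (hl2 : IsBilinMap l2) (y : V₁) (a : V₂) :
    twBr l1 l2 (fun x a => ρ1 x a) (fun a x => ρ2 a x) (y, 0) (0, a) = (-ρ2 a y, ρ1 y a) := by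
  simp [twBr, hl1.zero_right, hl2.zero_left]

lemma twBr_inr_inr (hl1 : IsBilinMap l1) (a b : V₂) :
    twBr l1 l2 (fun x a => ρ1 x a) (fun a x => ρ2 a x) (0, a) (0, b) = (0, l2 a b) := by
  simp [twBr, hl1.zero_left]

variable {k1 : V₁ → V₁ → ℝ} {k2 : V₂ → V₂ → ℝ} {J1 : Module.End ℝ V₁} {J2 : Module.End ℝ V₂}

lemma koszulCodiffTerm_twBr_inl (hk2 : IsBilinMap k2) (hl2 : IsBilinMap l2) (e x : V₁) :
    koszulCodiffTerm (prodK k1 k2) (twBr l1 l2 (fun x a => ρ1 x a) (fun a x => ρ2 a x))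
      (prodJ J1 J2) (e, 0) (x, 0) = koszulCodiffTerm k1 l1 J1 e x := by
  simp [koszulCodiffTerm, prodJ, prodK, twBr_inl_inl, hl2, hk2.zero_left]

lemma koszulCodiffTerm_twBr_inr (hk1 : IsBilinMap k1) (hk2J : IsCompatibleComplexStructure k2 J2)
    (hl1 : IsBilinMap l1) (hl2 : IsBilinMap l2) (x : V₁) (hcomm : ρ1 x * J2 = J2 * ρ1 x)
    (b : V₂) :
    koszulCodiffTerm (prodK k1 k2) (twBr l1 l2 (fun x a => ρ1 x a) (fun a x => ρ2 a x))
      (prodJ J1 J2) (0, b) (x, 0) = -k2 (ρ1 (J1 x) b) b := by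
  have hcancel : k2 (ρ1 x (J2 b)) b = -k2 (ρ1 x b) (J2 b) := by
    rw [← Module.End.mul_apply, hcomm, Module.End.mul_apply, hk2J.form_J_left]
  simp [koszulCodiffTerm, prodJ, prodK, twBr_inr_inl, twBr_inl_inr, twBr_inr_inr, hl1, hl2,
    hk1.zero_left, hk1.zero_right, hk2J.bilin.zero_right, hk2J.bilin.neg_left, hcancel]

lemma codiff_twBr_inl {ι₁ ι₂ : Type*} [Fintype ι₁] [Fintype ι₂] [DecidableEq ι₂]
    (hl1 : IsBilinMap l1) (hl1_anti : ∀ x y, l1 x y = -l1 y x)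
    (hl2 : IsBilinMap l2) (hl2_anti : ∀ a b, l2 a b = -l2 b a)
    (hk1J : IsCompatibleComplexStructure k1 J1) (hk2J : IsCompatibleComplexStructure k2 J2)
    (b1 : ι₁ → V₁) (b2 : Module.Basis ι₂ ℝ V₂) (hb2 : Orthonormal' k2 ⇑b2)
    {nab1 : V₁ → V₁ → V₁} (hnab1 : IsLeviCivita k1 l1 nab1)
    {nab : V₁ × V₂ → V₁ × V₂ → V₁ × V₂}
    (hnab : IsLeviCivita (prodK k1 k2)
      (twBr l1 l2 (fun x a => ρ1 x a) (fun a x => ρ2 a x)) nab)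
    (x : V₁) (hcomm : ρ1 x * J2 = J2 * ρ1 x) :
    codiff (Sum.elim (fun i => (b1 i, (0 : V₂))) (fun j => ((0 : V₁), b2 j))) nab
        (fund (prodK k1 k2) (prodJ J1 J2)) (x, 0) =
      codiff b1 nab1 (fund k1 J1) x - LinearMap.trace ℝ V₂ (ρ1 (J1 x)) := by
  rw [codiff_fund_eq_sum_koszulCodiffTerm (hk1J.prod hk2J)
      (twBr_antisymm ρ1 ρ2 hl1_anti hl2_anti) hnab,
    codiff_fund_eq_sum_koszulCodiffTerm hk1J hl1_anti hnab1,
    trace_eq_sum_of_orthonormal hk2J.bilin b2 hb2, Fintype.sum_sum_type, sub_eq_add_neg,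
    ← Finset.sum_neg_distrib]
  simp only [Sum.elim_inl, Sum.elim_inr, koszulCodiffTerm_twBr_inl ρ1 ρ2 hk2J.bilin hl2,
    koszulCodiffTerm_twBr_inr ρ1 ρ2 hk1J.bilin hk2J hl1 hl2 x hcomm]

end TwistedProduct

theorem codiff_at_J1x_of_twisted_product_general
    {V₁ V₂ : Type*} [AddCommGroup V₁] [Module ℝ V₁]
    [AddCommGroup V₂] [Module ℝ V₂]
    (l1 : V₁ → V₁ → V₁) (l2 : V₂ → V₂ → V₂)
    (hl1 : IsLieBracket l1) (hl2 : IsLieBracket l2)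
    (J1 : Module.End ℝ V₁) (J2 : Module.End ℝ V₂)
    (k1 : V₁ → V₁ → ℝ) (k2 : V₂ → V₂ → ℝ)
    (hH1 : IsHermitian l1 (⇑J1) k1) (hH2 : IsHermitian l2 (⇑J2) k2)
    (ρ1 : V₁ →ₗ[ℝ] Module.End ℝ V₂) (ρ2 : V₂ →ₗ[ℝ] Module.End ℝ V₁)
    (hcomm1 : ∀ x : V₁, ρ1 x * J2 = J2 * ρ1 x)
    {ι₁ ι₂ : Type*} [Fintype ι₁] [Fintype ι₂] [DecidableEq ι₂]
    (b1 : Module.Basis ι₁ ℝ V₁)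
    (b2 : Module.Basis ι₂ ℝ V₂) (hb2 : Orthonormal' k2 ⇑b2)
    (nab1 : V₁ → V₁ → V₁) (hnab1 : IsLeviCivita k1 l1 nab1)
    (nab : V₁ × V₂ → V₁ × V₂ → V₁ × V₂)
    (hnab : IsLeviCivita (prodK k1 k2)
      (twBr l1 l2 (fun x a => ρ1 x a) (fun a x => ρ2 a x)) nab)
    :
    ∀ x : V₁,
      codiff (Sum.elim (fun i => ((b1 i : V₁), (0 : V₂)))
          (fun j => ((0 : V₁), (b2 j : V₂)))) nab
          (fund (prodK k1 k2) (prodJ (⇑J1) (⇑J2))) ((J1 x, 0) : V₁ × V₂) =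
        -leeForm (⇑b1) nab1 k1 (⇑J1) x + LinearMap.trace ℝ V₂ (ρ1 x) := by
  intro x
  have hk1J := hH1.isCompatibleComplexStructure
  rw [codiff_twBr_inl ρ1 ρ2 hl1.1 hl1.2.1 hl2.1 hl2.2.1 hk1J hH2.isCompatibleComplexStructure
      b1 b2 hb2 hnab1 hnab (J1 x) (hcomm1 (J1 x)), leeForm, neg_neg, hk1J.J_J, map_neg, map_neg, sub_neg_eq_add]

/-- codifferential of the fundamental form of a Hermitian
twisted cartesian product evaluated at J1 x. -/
theorem codiff_at_J1x_of_twisted_product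
    {V₁ V₂ : Type*} [AddCommGroup V₁] [Module ℝ V₁] [FiniteDimensional ℝ V₁]
    [AddCommGroup V₂] [Module ℝ V₂] [FiniteDimensional ℝ V₂]
    (l1 : V₁ → V₁ → V₁) (l2 : V₂ → V₂ → V₂)
    (hl1 : IsLieBracket l1) (hl2 : IsLieBracket l2)
    (J1 : Module.End ℝ V₁) (J2 : Module.End ℝ V₂)
    (k1 : V₁ → V₁ → ℝ) (k2 : V₂ → V₂ → ℝ)
    (hH1 : IsHermitian l1 (⇑J1) k1) (hH2 : IsHermitian l2 (⇑J2) k2)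
    (ρ1 : V₁ →ₗ[ℝ] Module.End ℝ V₂) (ρ2 : V₂ →ₗ[ℝ] Module.End ℝ V₁)
    (hd1 : ∀ x, IsDeriv l2 (ρ1 x)) (hd2 : ∀ a, IsDeriv l1 (ρ2 a))
    (hrep1 : ∀ x y, ρ1 (l1 x y) = ρ1 x * ρ1 y - ρ1 y * ρ1 x)
    (hrep2 : ∀ a b, ρ2 (l2 a b) = ρ2 a * ρ2 b - ρ2 b * ρ2 a)
    (hcompat : Compat (fun x a => ρ1 x a) (fun a x => ρ2 a x))
    (hcomm1 : ∀ x : V₁, ρ1 x * J2 = J2 * ρ1 x)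
    (hcomm2 : ∀ a : V₂, ρ2 a * J1 = J1 * ρ2 a)
    {ι₁ ι₂ : Type*} [Fintype ι₁] [DecidableEq ι₁] [Fintype ι₂] [DecidableEq ι₂]
    (b1 : Module.Basis ι₁ ℝ V₁) (hb1 : Orthonormal' k1 ⇑b1)
    (b2 : Module.Basis ι₂ ℝ V₂) (hb2 : Orthonormal' k2 ⇑b2)
    (nab1 : V₁ → V₁ → V₁) (hnab1 : IsLeviCivita k1 l1 nab1)
    (nab2 : V₂ → V₂ → V₂) (hnab2 : IsLeviCivita k2 l2 nab2)
    (nab : V₁ × V₂ → V₁ × V₂ → V₁ × V₂)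
    (hnab : IsLeviCivita (prodK k1 k2)
      (twBr l1 l2 (fun x a => ρ1 x a) (fun a x => ρ2 a x)) nab)
    :
    ∀ x : V₁,
      codiff (Sum.elim (fun i => ((b1 i : V₁), (0 : V₂)))
          (fun j => ((0 : V₁), (b2 j : V₂)))) nab
          (fund (prodK k1 k2) (prodJ (⇑J1) (⇑J2))) ((J1 x, 0) : V₁ × V₂) =
        -leeForm (⇑b1) nab1 k1 (⇑J1) x + LinearMap.trace ℝ V₂ (ρ1 x) :=
  codiff_at_J1x_of_twisted_product_general l1 l2 hl1 hl2 J1 J2 k1 k2 hH1 hH2 ρ1 ρ2 hcomm1 b1 b2 hb2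
    nab1 hnab1 nab hnab
end

section
/- Let g2 = rr_{3,1} = span{e_3, e_4, e_5, e_6} with nonzero brackets [e_3,e_4] = e_4 and [e_3,e_5] = e_5, with complex structure J2(e_3) = e_6, J2(e_4) = e_5, and inner product making the basis orthogonal with |e_3|² = |e_6|² = σ > 0 and |e_4| = |e_5| = 1. Then (rr_{3,1}, J2, k2) is a Hermitian Lie algebra whose Lee form is θ2 = −2e^3, and it is locally conformally Kähler: dω2 = θ2 ∧ ω2 and dθ2 = 0, where ω2 = σe^{36} + e^{45}. -/
open scoped BigOperators

/-- The bracket of rr_{3,1} (indices 0,1,2,3 stand for e₃,e₄,e₅,e₆):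
[e₃,e₄]=e₄, [e₃,e₅]=e₅. -/
def br16 (u v : Fin 4 → ℝ) : Fin 4 → ℝ :=
  ![0, u 0 * v 1 - u 1 * v 0, u 0 * v 2 - u 2 * v 0, 0]

/-- J₂(e₃)=e₆, J₂(e₄)=e₅ with J₂² = −Id. -/
def J16 (u : Fin 4 → ℝ) : Fin 4 → ℝ := ![-u 3, -u 2, u 1, u 0]

/-- The metric: basis orthogonal, |e₃|²=|e₆|²=σ, |e₄|=|e₅|=1. -/
def k16 (σ : ℝ) (u v : Fin 4 → ℝ) : ℝ :=
  σ * (u 0 * v 0) + u 1 * v 1 + u 2 * v 2 + σ * (u 3 * v 3)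

/-- The Lee form θ₂ = −2e³. -/
def th16 (u : Fin 4 → ℝ) : ℝ := -2 * u 0

/-!
All claims except the one about the Lee form are polynomial identities in the coordinates.
The Lee form is a sum over a `k`-orthonormal basis `b` of the terms `(∇_{b i} ω)(b i, JX)`;
the Koszul formula turns each into a quadratic polynomial in the coordinates of `b i`, and
whatever the orthonormal basis, `∑ i, b i ⊗ b i` is the inverse metric `diag(σ⁻¹, 1, 1, σ⁻¹)`.
Only its `e₄, e₅` block contributes, which gives `θ = -2 e³`.
-/

open Finset

section Orthonormal

variable {V : Type*} [AddCommGroup V] [Module ℝ V] {ι : Type*} [Fintype ι] [DecidableEq ι]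

theorem IsBilinMap.sum_orthonormal'_smul {k : V → V → ℝ} (hk : IsBilinMap k)
    (b : Module.Basis ι ℝ V) (hb : Orthonormal' k ⇑b) (u : V) :
    ∑ i, k u (b i) • b i = u := by
  let K : V →ₗ[ℝ] V →ₗ[ℝ] ℝ := LinearMap.mk₂ ℝ k hk.1 hk.2.1 hk.2.2.1 hk.2.2.2
  have hrepr : ∀ j, k u (b j) = b.repr u j := fun j => by
    conv_lhs => rw [← b.sum_repr u]
    change K (∑ i, b.repr u i • b i) (b j) = _
    simp only [map_sum, LinearMap.sum_apply, map_smul, LinearMap.smul_apply]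
    simp [K, (hb · j)]
  simp_rw [hrepr]
  exact b.sum_repr u

end Orthonormal

section DiagonalForm

variable {κ : Type*} [Fintype κ]

def diagForm (w : κ → ℝ) (u v : κ → ℝ) : ℝ := ∑ p, w p * (u p * v p)

theorem isBilinMap_diagForm (w : κ → ℝ) : IsBilinMap (diagForm w) := by
  refine ⟨?_, ?_, ?_, ?_⟩ <;> intros <;>
    simp only [diagForm, Pi.add_apply, Pi.smul_apply, smul_eq_mul, mul_sum, ← sum_add_distrib] <;>
    exact sum_congr rfl fun _ _ => by ring

theorem isInner_diagForm {w : κ → ℝ} (hw : ∀ p, 0 < w p) : IsInner (diagForm w) := by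
  refine ⟨isBilinMap_diagForm w, fun u v => sum_congr rfl fun p _ => by ring, fun u hu => ?_⟩
  obtain ⟨p, hp⟩ := Function.ne_iff.mp hu
  exact sum_pos' (fun q _ => mul_nonneg (hw q).le (mul_self_nonneg _))
    ⟨p, mem_univ p, mul_pos (hw p) (mul_self_pos.mpr hp)⟩

theorem diagForm_single_left [DecidableEq κ] (w : κ → ℝ) (p : κ) (c : ℝ) (v : κ → ℝ) :
    diagForm w (Pi.single p c) v = w p * c * v p := by
  simp [diagForm, Pi.single_apply, mul_assoc]

theorem sum_mul_of_orthonormal'_diagForm [DecidableEq κ] {ι : Type*} [Fintype ι]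
    [DecidableEq ι] {w : κ → ℝ} {b : Module.Basis ι ℝ (κ → ℝ)}
    (hb : Orthonormal' (diagForm w) ⇑b) {p : κ} (hp : w p ≠ 0) (q : κ) :
    ∑ i, b i p * b i q = if q = p then (w p)⁻¹ else 0 := by
  have h := congrFun
    ((isBilinMap_diagForm w).sum_orthonormal'_smul b hb (Pi.single p (w p)⁻¹)) q
  simpa [diagForm_single_left, hp, Pi.single_apply] using h

end DiagonalForm

theorem k16_eq_diagForm (σ : ℝ) : k16 σ = diagForm ![σ, 1, 1, σ] := by
  ext u v
  simp [k16, diagForm, Fin.sum_univ_four]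

theorem isLieBracket_br16 : IsLieBracket br16 := by
  refine ⟨⟨?_, ?_, ?_, ?_⟩, ?_, fun u v w => ?_⟩ <;> intros <;> ext i <;> fin_cases i <;>
    simp [br16] <;> ring

theorem isHermitian_br16_J16 {σ : ℝ} (hσ : 0 < σ) : IsHermitian br16 J16 (k16 σ) := by
  refine ⟨?_, fun u => ?_, fun u v => ?_, fun u v => ?_⟩
  · rw [k16_eq_diagForm]
    refine isInner_diagForm fun p => ?_
    fin_cases p <;> simp [hσ]
  · ext i; fin_cases i <;> simp [J16]
  · ext i; fin_cases i <;> simp [nijenhuis, br16, J16] <;> ring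
  · simp [k16, J16]; ring

/-- The summand of the codifferential, as the Koszul formula computes it. -/
theorem fund_nab_add_fund_nab {σ : ℝ} {nab : (Fin 4 → ℝ) → (Fin 4 → ℝ) → Fin 4 → ℝ}
    (hnab : IsLeviCivita (k16 σ) br16 nab) (a Y : Fin 4 → ℝ) :
    fund (k16 σ) J16 (nab a a) Y + fund (k16 σ) J16 a (nab a Y)
      = a 0 * a 2 * Y 1 - a 1 * a 3 * Y 1 - a 0 * a 1 * Y 2 - a 2 * a 3 * Y 2
        + (a 1 * a 1 + a 2 * a 2) * Y 3 := by
  have haa := hnab a a (J16 Y)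
  have haY := hnab a Y (J16 a)
  simp only [fund, k16, br16, J16, Matrix.cons_val_zero, Matrix.cons_val_one, Matrix.head_cons,
    Matrix.cons_val_two, Matrix.tail_cons, Matrix.cons_val_three] at haa haY ⊢
  linear_combination (-1/2 : ℝ) * haa + (1/2 : ℝ) * haY

theorem leeForm_rr31 {σ : ℝ} (hσ : 0 < σ) {ι : Type} [Fintype ι] [DecidableEq ι]
    {b : Module.Basis ι ℝ (Fin 4 → ℝ)} (hb : Orthonormal' (k16 σ) ⇑b)
    {nab : (Fin 4 → ℝ) → (Fin 4 → ℝ) → Fin 4 → ℝ} (hnab : IsLeviCivita (k16 σ) br16 nab)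
    (X : Fin 4 → ℝ) : leeForm (⇑b) nab (k16 σ) J16 X = th16 X := by
  rw [k16_eq_diagForm] at hb
  have hinv : ∀ p q, ∑ i, b i p * b i q = if q = p then (![σ, 1, 1, σ] p)⁻¹ else 0 :=
    fun p => sum_mul_of_orthonormal'_diagForm hb (by fin_cases p <;> simp [hσ.ne'])
  have hsum : leeForm (⇑b) nab (k16 σ) J16 X
      = -∑ i, (fund (k16 σ) J16 (nab (b i) (b i)) (J16 X)
          + fund (k16 σ) J16 (b i) (nab (b i) (J16 X))) := by
    simp only [leeForm, codiff, neg_neg, ← sum_neg_distrib, neg_sub', sub_neg_eq_add]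
  simp only [hsum, fund_nab_add_fund_nab hnab, sum_add_distrib, sum_sub_distrib, ← sum_mul,
    hinv]
  simp [th16, J16, one_add_one_eq_two]

theorem d2_fund_eq_wedge12_th16 (σ : ℝ) (u v w : Fin 4 → ℝ) :
    d2 br16 (fund (k16 σ) J16) u v w = wedge12 th16 (fund (k16 σ) J16) u v w := by
  simp only [d2, wedge12, fund, th16, k16, J16, br16, Matrix.cons_val_zero, Matrix.cons_val_one,
    Matrix.head_cons, Matrix.cons_val_two, Matrix.tail_cons, Matrix.cons_val_three]
  ring

theorem d1_th16 (u v : Fin 4 → ℝ) : d1 br16 th16 u v = 0 := by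
  simp [d1, th16, br16]

/-- (rr_{3,1}, J₂, k₂) is a Hermitian Lie algebra with Lee form
θ₂ = −2e³, and it is locally conformally Kähler: dω₂ = θ₂ ∧ ω₂ and dθ₂ = 0. -/
theorem rr31_lck (σ : ℝ) (hσ : 0 < σ) :
    IsLieBracket br16 ∧
    IsHermitian br16 J16 (k16 σ) ∧
    (∀ (ι : Type) [Fintype ι] [DecidableEq ι] (b : Module.Basis ι ℝ (Fin 4 → ℝ)),
      Orthonormal' (k16 σ) ⇑b →
      ∀ nab, IsLeviCivita (k16 σ) br16 nab →
        ∀ X, leeForm (⇑b) nab (k16 σ) J16 X = th16 X) ∧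
    (∀ u v w, d2 br16 (fund (k16 σ) J16) u v w =
      wedge12 th16 (fund (k16 σ) J16) u v w) ∧
    (∀ u v, d1 br16 th16 u v = 0) :=
  ⟨isLieBracket_br16, isHermitian_br16_J16 hσ,
    fun _ _ _ _ hb _ hnab => leeForm_rr31 hσ hb hnab,
    d2_fund_eq_wedge12_th16 σ, d1_th16⟩
end

section
/- Let g = g1 ⋈ g2 be a twisted cartesian product with ρ2 = 0. Then g is the semidirect product g1 ⋉_{ρ1} g2; moreover, if (g1, J1, k1) and (g2, J2, k2) are Hermitian with ρ1(x) commuting with J2 for all x, the Lee form of the product Hermitian structure is θ(x) = θ1(x) − tr(ρ1(x)) for x ∈ g1 and θ(a) = θ2(a) for a ∈ g2. In particular, if g1 and g2 are balanced, then g1 ⋉_{ρ1} g2 is balanced if and only if tr(ρ1(x)) = 0 for all x ∈ g1. -/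
open scoped BigOperators

section Aux

variable {V : Type*} [AddCommGroup V] [Module ℝ V]

lemma IsBilinMap.zl {V₁ V₂ W : Type*} [AddCommGroup V₁] [Module ℝ V₁]
    [AddCommGroup V₂] [Module ℝ V₂] [AddCommGroup W] [Module ℝ W]
    {f : V₁ → V₂ → W} (h : IsBilinMap f) (v : V₂) : f 0 v = 0 := by
  simpa using h.2.1 0 0 v

lemma IsBilinMap.zr {V₁ V₂ W : Type*} [AddCommGroup V₁] [Module ℝ V₁]
    [AddCommGroup V₂] [Module ℝ V₂] [AddCommGroup W] [Module ℝ W]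
    {f : V₁ → V₂ → W} (h : IsBilinMap f) (u : V₁) : f u 0 = 0 := by
  simpa using h.2.2.2 0 u 0

lemma IsBilinMap.nl {V₁ V₂ W : Type*} [AddCommGroup V₁] [Module ℝ V₁]
    [AddCommGroup V₂] [Module ℝ V₂] [AddCommGroup W] [Module ℝ W]
    {f : V₁ → V₂ → W} (h : IsBilinMap f) (u : V₁) (v : V₂) : f (-u) v = -f u v := by
  simpa using h.2.1 (-1) u v

lemma IsBilinMap.nr {V₁ V₂ W : Type*} [AddCommGroup V₁] [Module ℝ V₁]
    [AddCommGroup V₂] [Module ℝ V₂] [AddCommGroup W] [Module ℝ W]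
    {f : V₁ → V₂ → W} (h : IsBilinMap f) (u : V₁) (v : V₂) : f u (-v) = -f u v := by
  simpa using h.2.2.2 (-1) u v

/-- Explicit formula for the Lee form in terms of the bracket and metric only. -/
noncomputable def Flee {ι : Type*} [Fintype ι] (l : V → V → V) (k : V → V → ℝ)
    (J : V → V) (E : ι → V) (X : V) : ℝ :=
  ∑ i, (k (l (E i) X) (E i)
    - (1/2) * (k (l (E i) (J X)) (J (E i)) - k (l (J X) (J (E i))) (E i)
        - k (l (E i) (J (E i))) (J X)))

lemma leeForm_eq_Flee {ι : Type*} [Fintype ι] {l : V → V → V} {k : V → V → ℝ}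
    {J : V → V} {nab : V → V → V} (E : ι → V)
    (hLC : IsLeviCivita k l nab) (hkb : IsBilinMap k)
    (hks : ∀ u v, k u v = k v u) (hla : ∀ u v, l u v = -l v u)
    (hkJ : ∀ u v, k (J u) (J v) = k u v) (X : V) :
    leeForm E nab k J X = Flee l k J E X := by
  unfold leeForm codiff Flee fund
  rw [neg_neg]
  refine Finset.sum_congr rfl fun i _ => ?_
  have hK1 := hLC (E i) (E i) X
  have hK2 := hLC (E i) (J X) (J (E i))
  have h0 : k (l (E i) (E i)) X = 0 := by
    have h2 : k (l (E i) (E i)) X = -k (l (E i) (E i)) X := by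
      nth_rewrite 1 [hla (E i) (E i)]
      exact hkb.nl _ _
    linarith
  have hJ1 : k (J (nab (E i) (E i))) (J X) = k (nab (E i) (E i)) X := hkJ _ _
  have hsym : k (J (E i)) (nab (E i) (J X)) = k (nab (E i) (J X)) (J (E i)) := hks _ _
  rw [hJ1, hsym]
  linarith

lemma Flee_add {ι : Type*} [Fintype ι] {l : V → V → V} {k : V → V → ℝ}
    {J : V → V} (E : ι → V) (hlb : IsBilinMap l) (hkb : IsBilinMap k)
    (hJa : ∀ u v, J (u + v) = J u + J v) (X Y : V) :
    Flee l k J E (X + Y) = Flee l k J E X + Flee l k J E Y := by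
  unfold Flee
  rw [← Finset.sum_add_distrib]
  refine Finset.sum_congr rfl fun i _ => ?_
  simp only [hJa, hlb.1, hlb.2.2.1, hkb.1, hkb.2.2.1]
  ring

end Aux

/-- the case ρ2 = 0 — the twisted cartesian product is the
semidirect product, the compatibility conditions hold automatically, the Lee
form is θ(x) = θ1(x) − tr ρ1(x), θ(a) = θ2(a), and for balanced factors the
semidirect product is balanced iff tr ρ1(x) = 0 for all x. -/
theorem semidirect_case_of_twisted_product
    {V₁ V₂ : Type*} [AddCommGroup V₁] [Module ℝ V₁] [FiniteDimensional ℝ V₁]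
    [AddCommGroup V₂] [Module ℝ V₂] [FiniteDimensional ℝ V₂]
    (l1 : V₁ → V₁ → V₁) (l2 : V₂ → V₂ → V₂)
    (hl1 : IsLieBracket l1) (hl2 : IsLieBracket l2)
    (J1 : Module.End ℝ V₁) (J2 : Module.End ℝ V₂)
    (k1 : V₁ → V₁ → ℝ) (k2 : V₂ → V₂ → ℝ)
    (hH1 : IsHermitian l1 (⇑J1) k1) (hH2 : IsHermitian l2 (⇑J2) k2)
    (ρ1 : V₁ →ₗ[ℝ] Module.End ℝ V₂)
    (hd1 : ∀ x, IsDeriv l2 (ρ1 x))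
    (hrep1 : ∀ x y, ρ1 (l1 x y) = ρ1 x * ρ1 y - ρ1 y * ρ1 x)
    (hcomm1 : ∀ x : V₁, ρ1 x * J2 = J2 * ρ1 x)
    {ι₁ ι₂ : Type*} [Fintype ι₁] [DecidableEq ι₁] [Fintype ι₂] [DecidableEq ι₂]
    (b1 : Module.Basis ι₁ ℝ V₁) (hb1 : Orthonormal' k1 ⇑b1)
    (b2 : Module.Basis ι₂ ℝ V₂) (hb2 : Orthonormal' k2 ⇑b2)
    (nab1 : V₁ → V₁ → V₁) (hnab1 : IsLeviCivita k1 l1 nab1)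
    (nab2 : V₂ → V₂ → V₂) (hnab2 : IsLeviCivita k2 l2 nab2)
    (nab : V₁ × V₂ → V₁ × V₂ → V₁ × V₂)
    (hnab : IsLeviCivita (prodK k1 k2)
      (twBr l1 l2 (fun x a => ρ1 x a) (fun (_ : V₂) (_ : V₁) => (0 : V₁))) nab) :
    Compat (fun x a => ρ1 x a) (fun (_ : V₂) (_ : V₁) => (0 : V₁)) ∧
    (∀ u v : V₁ × V₂,
      twBr l1 l2 (fun x a => ρ1 x a) (fun (_ : V₂) (_ : V₁) => (0 : V₁)) u v =
        (l1 u.1 v.1, l2 u.2 v.2 + ρ1 u.1 v.2 - ρ1 v.1 u.2)) ∧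
    (∀ x : V₁,
      leeForm (Sum.elim (fun i => ((b1 i : V₁), (0 : V₂)))
          (fun j => ((0 : V₁), (b2 j : V₂)))) nab (prodK k1 k2)
          (prodJ (⇑J1) (⇑J2)) (x, 0) =
        leeForm (⇑b1) nab1 k1 (⇑J1) x - LinearMap.trace ℝ V₂ (ρ1 x)) ∧
    (∀ a : V₂,
      leeForm (Sum.elim (fun i => ((b1 i : V₁), (0 : V₂)))
          (fun j => ((0 : V₁), (b2 j : V₂)))) nab (prodK k1 k2)
          (prodJ (⇑J1) (⇑J2)) (0, a) =
        leeForm (⇑b2) nab2 k2 (⇑J2) a) ∧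
    ((∀ x : V₁, leeForm (⇑b1) nab1 k1 (⇑J1) x = 0) →
     (∀ a : V₂, leeForm (⇑b2) nab2 k2 (⇑J2) a = 0) →
     ((∀ X : V₁ × V₂,
        leeForm (Sum.elim (fun i => ((b1 i : V₁), (0 : V₂)))
          (fun j => ((0 : V₁), (b2 j : V₂)))) nab (prodK k1 k2)
          (prodJ (⇑J1) (⇑J2)) X = 0) ↔
       (∀ x : V₁, LinearMap.trace ℝ V₂ (ρ1 x) = 0))) := by

  obtain ⟨hl1b, hl1a, _⟩ := hl1
  obtain ⟨hl2b, hl2a, _⟩ := hl2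
  obtain ⟨⟨hk1b, hk1s, _⟩, hJJ1, _, hkJ1⟩ := hH1
  obtain ⟨⟨hk2b, hk2s, _⟩, hJJ2, _, hkJ2⟩ := hH2
  set L : V₁ × V₂ → V₁ × V₂ → V₁ × V₂ :=
    twBr l1 l2 (fun x a => ρ1 x a) (fun (_ : V₂) (_ : V₁) => (0 : V₁)) with hL
  set K : V₁ × V₂ → V₁ × V₂ → ℝ := prodK k1 k2 with hK
  set JJ : V₁ × V₂ → V₁ × V₂ := prodJ (⇑J1) (⇑J2) with hJ
  set E : ι₁ ⊕ ι₂ → V₁ × V₂ :=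
    Sum.elim (fun i => ((b1 i : V₁), (0 : V₂))) (fun j => ((0 : V₁), (b2 j : V₂))) with hE
  -- bilinearity etc. for product data
  have hKb : IsBilinMap K := by
    refine ⟨?_, ?_, ?_, ?_⟩ <;> intros <;>
      simp only [hK, prodK, Prod.fst_add, Prod.snd_add, Prod.smul_fst, Prod.smul_snd,
        hk1b.1, hk2b.1, hk1b.2.1, hk2b.2.1, hk1b.2.2.1, hk2b.2.2.1, hk1b.2.2.2,
        hk2b.2.2.2, smul_eq_mul] <;> ring
  have hKs : ∀ u v, K u v = K v u := by
    intro u v; simp only [hK, prodK]; rw [hk1s, hk2s]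
  have hKJ : ∀ u v, K (JJ u) (JJ v) = K u v := by
    intro u v; simp only [hK, hJ, prodK, prodJ]; rw [hkJ1, hkJ2]
  have hLa : ∀ u v, L u v = -L v u := by
    intro u v
    simp only [hL, twBr, Prod.neg_mk, add_zero, sub_zero]
    refine Prod.ext ?_ ?_
    · simp [hl1a u.1 v.1]
    · simp only [hl2a u.2 v.2]; abel
  have hLb : IsBilinMap L := by
    refine ⟨?_, ?_, ?_, ?_⟩ <;> intros <;>
      refine Prod.ext ?_ ?_ <;>
      simp only [hL, twBr, Prod.fst_add, Prod.snd_add, Prod.smul_fst, Prod.smul_snd,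
        hl1b.1, hl2b.1, hl1b.2.1, hl2b.2.1, hl1b.2.2.1, hl2b.2.2.1, hl1b.2.2.2,
        hl2b.2.2.2, map_add, map_smul, LinearMap.add_apply, LinearMap.smul_apply,
        add_zero, sub_zero, smul_zero] <;> module
  have hJa : ∀ u v : V₁ × V₂, JJ (u + v) = JJ u + JJ v := by
    intro u v
    simp [hJ, prodJ, Prod.fst_add, Prod.snd_add, map_add, Prod.mk_add_mk]
  -- Lee forms via the explicit formula
  have hF1 : ∀ x, leeForm (⇑b1) nab1 k1 (⇑J1) x = Flee l1 k1 (⇑J1) (⇑b1) x :=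
    fun x => leeForm_eq_Flee _ hnab1 hk1b hk1s hl1a hkJ1 x
  have hF2 : ∀ a, leeForm (⇑b2) nab2 k2 (⇑J2) a = Flee l2 k2 (⇑J2) (⇑b2) a :=
    fun a => leeForm_eq_Flee _ hnab2 hk2b hk2s hl2a hkJ2 a
  have hFp : ∀ X, leeForm E nab K JJ X = Flee L K JJ E X :=
    fun X => leeForm_eq_Flee _ hnab hKb hKs hLa hKJ X
  -- trace formula
  have hrep : ∀ (v : V₂) (j : ι₂), k2 v (b2 j) = b2.repr v j := by
    intro v j
    let Kj : V₂ →ₗ[ℝ] ℝ :=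
      { toFun := fun w => k2 w (b2 j)
        map_add' := fun a b => hk2b.1 a b _
        map_smul' := fun c a => hk2b.2.1 c a _ }
    have h1 : k2 v (b2 j) = Kj v := rfl
    rw [h1, ← Module.Basis.sum_repr b2 v, map_sum]
    simp only [map_smul, smul_eq_mul, Kj, LinearMap.coe_mk, AddHom.coe_mk]
    have hterm : ∀ x : ι₂, (b2.repr v) x * k2 (b2 x) (b2 j) =
        if x = j then (b2.repr v) x else 0 := by
      intro x; rw [hb2 x j]; split <;> simp
    rw [Finset.sum_congr rfl fun x _ => hterm x, Finset.sum_ite_eq' Finset.univ j]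
    simp
  have htr : ∀ x, LinearMap.trace ℝ V₂ (ρ1 x) = ∑ j, k2 (ρ1 x (b2 j)) (b2 j) := by
    intro x
    rw [LinearMap.trace_eq_matrix_trace ℝ b2, Matrix.trace]
    refine Finset.sum_congr rfl fun j _ => ?_
    rw [hrep]
    simp [Matrix.diag, LinearMap.toMatrix_apply]
  -- zero lemmas
  have hk1zl := hk1b.zl; have hk1zr := hk1b.zr
  have hk2zl := hk2b.zl; have hk2zr := hk2b.zr
  have hk2nl := hk2b.nl
  have hl1zl := hl1b.zl; have hl1zr := hl1b.zr
  have hl2zl := hl2b.zl; have hl2zr := hl2b.zr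
  -- key computations of Flee on the product
  have hθ1 : ∀ x, Flee L K JJ E (x, (0 : V₂)) =
      Flee l1 k1 (⇑J1) (⇑b1) x - ∑ j, k2 (ρ1 x (b2 j)) (b2 j) := by
    intro x
    unfold Flee
    rw [Fintype.sum_sum_type]
    have hA : ∀ i : ι₁,
        (K (L (E (Sum.inl i)) (x, (0:V₂))) (E (Sum.inl i))
          - (1/2) * (K (L (E (Sum.inl i)) (JJ (x, 0))) (JJ (E (Sum.inl i)))
            - K (L (JJ (x, 0)) (JJ (E (Sum.inl i)))) (E (Sum.inl i))
            - K (L (E (Sum.inl i)) (JJ (E (Sum.inl i)))) (JJ (x, 0)))) =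
        (k1 (l1 (b1 i) x) (b1 i)
          - (1/2) * (k1 (l1 (b1 i) (J1 x)) (J1 (b1 i)) - k1 (l1 (J1 x) (J1 (b1 i))) (b1 i)
            - k1 (l1 (b1 i) (J1 (b1 i))) (J1 x))) := by
      intro i
      simp [hL, hK, hJ, hE, twBr, prodK, prodJ, map_zero, hk2zl, hk2zr, hk1zl, hk1zr]
    have hB : ∀ j : ι₂,
        (K (L (E (Sum.inr j)) (x, (0:V₂))) (E (Sum.inr j))
          - (1/2) * (K (L (E (Sum.inr j)) (JJ (x, 0))) (JJ (E (Sum.inr j)))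
            - K (L (JJ (x, 0)) (JJ (E (Sum.inr j)))) (E (Sum.inr j))
            - K (L (E (Sum.inr j)) (JJ (E (Sum.inr j)))) (JJ (x, 0)))) =
        -(k2 (ρ1 x (b2 j)) (b2 j)) := by
      intro j
      have hc : ρ1 (J1 x) (J2 (b2 j)) = J2 (ρ1 (J1 x) (b2 j)) := by
        have := congrArg (fun f : Module.End ℝ V₂ => f (b2 j)) (hcomm1 (J1 x))
        simpa using this
      have hq : k2 (ρ1 (J1 x) (b2 j)) (J2 (b2 j)) = -k2 (J2 (ρ1 (J1 x) (b2 j))) (b2 j) := by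
        have h1 := hkJ2 (ρ1 (J1 x) (b2 j)) (J2 (b2 j))
        rw [hJJ2 (b2 j)] at h1
        rw [← h1, hk2b.nr]
      simp only [hL, hK, hJ, hE, twBr, prodK, prodJ, Sum.elim_inr, map_zero,
        LinearMap.zero_apply, hl1zl, hl1zr, hl2zl, hl2zr, zero_add, add_zero, sub_zero,
        zero_sub, hk1zl, hk1zr, hk2zl, hk2zr, hk2nl, hc]
      linarith [hq]
    rw [Finset.sum_congr rfl (fun i _ => hA i), Finset.sum_congr rfl (fun j _ => hB j)]
    rw [Finset.sum_neg_distrib]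
    rfl
  have hθ2 : ∀ a, Flee L K JJ E ((0 : V₁), a) = Flee l2 k2 (⇑J2) (⇑b2) a := by
    intro a
    unfold Flee
    rw [Fintype.sum_sum_type]
    have hA : ∀ i : ι₁,
        (K (L (E (Sum.inl i)) ((0:V₁), a)) (E (Sum.inl i))
          - (1/2) * (K (L (E (Sum.inl i)) (JJ (0, a))) (JJ (E (Sum.inl i)))
            - K (L (JJ (0, a)) (JJ (E (Sum.inl i)))) (E (Sum.inl i))
            - K (L (E (Sum.inl i)) (JJ (E (Sum.inl i)))) (JJ (0, a)))) = 0 := by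
      intro i
      simp [hL, hK, hJ, hE, twBr, prodK, prodJ, map_zero, hk2zl, hk2zr, hk1zl, hk1zr,
        hl1zl, hl1zr, hl2zl, hl2zr]
    have hB : ∀ j : ι₂,
        (K (L (E (Sum.inr j)) ((0:V₁), a)) (E (Sum.inr j))
          - (1/2) * (K (L (E (Sum.inr j)) (JJ (0, a))) (JJ (E (Sum.inr j)))
            - K (L (JJ (0, a)) (JJ (E (Sum.inr j)))) (E (Sum.inr j))
            - K (L (E (Sum.inr j)) (JJ (E (Sum.inr j)))) (JJ (0, a)))) =
        (k2 (l2 (b2 j) a) (b2 j)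
          - (1/2) * (k2 (l2 (b2 j) (J2 a)) (J2 (b2 j)) - k2 (l2 (J2 a) (J2 (b2 j))) (b2 j)
            - k2 (l2 (b2 j) (J2 (b2 j))) (J2 a))) := by
      intro j
      simp [hL, hK, hJ, hE, twBr, prodK, prodJ, map_zero, hk1zl, hk1zr, hk2zl, hk2zr,
        hl1zl, hl1zr]
    rw [Finset.sum_congr rfl (fun i _ => hA i), Finset.sum_congr rfl (fun j _ => hB j)]
    simp [Flee]
  refine ⟨⟨?_, ?_⟩, ?_, ?_, ?_, ?_⟩
  · intro x a b; simp
  · intro x y a; rfl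
  · intro u v; simp [hL, twBr]
  · intro x
    rw [hFp, hθ1, hF1, htr]
  · intro a
    rw [hFp, hθ2, hF2]
  · intro h1 h2
    constructor
    · intro hX x
      have hx := hX (x, 0)
      rw [hFp, hθ1] at hx
      have h1x := h1 x
      rw [hF1] at h1x
      rw [htr]
      linarith
    · intro ht X
      obtain ⟨x, a⟩ := X
      have hsplit : ((x, a) : V₁ × V₂) = (x, 0) + (0, a) := by
        simp [Prod.mk_add_mk]
      rw [hFp, hsplit, Flee_add E hLb hKb hJa, hθ1, hθ2]
      have h1x := h1 x
      rw [hF1] at h1x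
      have h2a := h2 a
      rw [hF2] at h2a
      have htx := ht x
      rw [htr] at htx
      linarith
end
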